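/- arXiv:2206.13743 — 3 statements merged into one kernel-verified Lean document; each statement's English description precedes it below -/
import Mathlib

section
/- For any Hermitian matrix Π that is not diagonal in the computational basis, there exists a unit vector |ψ⟩ = Σ_y c_y |y⟩ with |c_y|² = 1/2^n for all y such that tr[((1/2^n)I − |ψ⟩⟨ψ|)Π] ≠ 0. (Completeness of ψ-induced quantum noise witnesses.) -/
/-!
If the trace vanished for every flat `c`, then, since
`tr ((N⁻¹ • 1 - c c⋆) Π) = N⁻¹ tr Π - c⋆ Π c` with `N = 2 ^ n`, the quadratic form `c ↦ c⋆ Π c`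
would be constant on vectors whose entries all have modulus one (rescale by `1 / √N`).
Take the vector that is `1` off `{y, z}`, `α` at `z` and `β` at `y`. Letting `β` run over
`±1, ±i` and polarizing shows that row `y` of `Π` annihilates the vector with `β = 0`;
comparing `α = 1` with `α = -1` then gives `Π y z = 0`.
-/

namespace Matrix

variable {ι : Type*} [Fintype ι]

theorem trace_vecMulVec_star_mul (c : ι → ℂ) (P : Matrix ι ι ℂ) :
    (vecMulVec c (star c) * P).trace = star c ⬝ᵥ (P *ᵥ c) := by
  rw [vecMulVec_mul, trace_vecMulVec, dotProduct_comm, dotProduct_mulVec]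

theorem star_smul_dotProduct_mulVec_smul (r : ℂ) (c : ι → ℂ) (P : Matrix ι ι ℂ) :
    star (r • c) ⬝ᵥ (P *ᵥ (r • c)) = Complex.normSq r * (star c ⬝ᵥ (P *ᵥ c)) := by
  rw [star_smul, mulVec_smul, dotProduct_smul, smul_dotProduct, smul_eq_mul, smul_eq_mul,
    ← mul_assoc]
  exact congrArg (· * _) (Complex.mul_conj r)

/-- Polarization: the values at `β = ±1, ±i` already isolate the cross term. -/
theorem star_dotProduct_mulVec_eq_zero_of_forall_norm_eq_one {P : Matrix ι ι ℂ} {x e : ι → ℂ}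
    {k : ℂ} (h : ∀ β : ℂ, ‖β‖ = 1 → star (x + β • e) ⬝ᵥ (P *ᵥ (x + β • e)) = k) :
    star e ⬝ᵥ (P *ᵥ x) = 0 := by
  have h₁ := h 1 (by simp)
  have h₂ := h (-1) (by simp)
  have h₃ := h Complex.I (by simp)
  have h₄ := h (-Complex.I) (by simp)
  simp only [star_add, star_smul, mulVec_add, mulVec_smul, add_dotProduct, dotProduct_add,
    smul_dotProduct, dotProduct_smul, smul_eq_mul, Complex.star_def, map_one, map_neg,
    Complex.conj_I] at h₁ h₂ h₃ h₄
  linear_combination (h₁ - h₂ + Complex.I * (h₃ - h₄)) / 4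
    + (star e ⬝ᵥ (P *ᵥ x) - star x ⬝ᵥ (P *ᵥ e)) / 2 * Complex.I_sq

variable [DecidableEq ι]

theorem apply_eq_zero_of_forall_norm_eq_one {P : Matrix ι ι ℂ} {k : ℂ}
    (hP : ∀ c : ι → ℂ, (∀ y, ‖c y‖ = 1) → star c ⬝ᵥ (P *ᵥ c) = k) {y z : ι} (hyz : y ≠ z) :
    P y z = 0 := by
  set u : ι → ℂ := fun w => if w = y ∨ w = z then 0 else 1
  have hrow : ∀ α : ℂ, ‖α‖ = 1 → (P *ᵥ (u + α • Pi.single z 1)) y = 0 := by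
    intro α hα
    have hcircle := star_dotProduct_mulVec_eq_zero_of_forall_norm_eq_one (P := P)
      (x := u + α • Pi.single z 1) (e := Pi.single y 1) (k := k) fun β hβ => hP _ fun w => by
        by_cases hwy : w = y
        · subst hwy; simp [u, hyz, hβ]
        by_cases hwz : w = z
        · subst hwz; simp [u, hwy, hα]
        simp [u, hwy, hwz]
    simpa [← Pi.single_star] using hcircle
  have h₁ := hrow 1 (by simp)
  have h₂ := hrow (-1) (by simp)
  simp only [mulVec_add, mulVec_neg, mulVec_single_one, Pi.add_apply, Pi.neg_apply, col_apply,
    one_smul, neg_smul] at h₁ h₂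
  linear_combination (h₁ - h₂) / 2

end Matrix

open Matrix

theorem witness_completeness_general {n : ℕ} (Pm : Matrix (Fin n → Bool) (Fin n → Bool) ℂ)
    (hq : ∃ y z, y ≠ z ∧ Pm y z ≠ 0) :
    ∃ c : (Fin n → Bool) → ℂ,
      (∀ y, Complex.normSq (c y) = 1 / 2 ^ n) ∧
      ((((1 : ℂ) / 2 ^ n) • (1 : Matrix (Fin n → Bool) (Fin n → Bool) ℂ)
          - Matrix.vecMulVec c (star c)) * Pm).trace ≠ 0 := by
  obtain ⟨y, z, hyz, hP⟩ := hq
  by_contra! htrace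
  set r : ℂ := ↑(Real.sqrt (2 ^ n))⁻¹
  have hr : Complex.normSq r = 1 / 2 ^ n := by
    rw [Complex.normSq_ofReal, ← mul_inv, Real.mul_self_sqrt (by positivity), one_div]
  refine hP (apply_eq_zero_of_forall_norm_eq_one (k := Pm.trace) (fun c hc => ?_) hyz)
  have h := htrace (r • c) fun w => by
    rw [Pi.smul_apply, smul_eq_mul, Complex.normSq_mul, hr, Complex.normSq_eq_norm_sq, hc w]
    norm_num
  rw [sub_mul, trace_sub, smul_mul, one_mul, trace_smul, trace_vecMulVec_star_mul,
    star_smul_dotProduct_mulVec_smul, hr, sub_eq_zero, smul_eq_mul] at h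
  push_cast at h
  field_simp at h
  exact h.symm

/-- Completeness of ψ-induced quantum noise witnesses: for any Hermitian matrix `Pm`
that is not diagonal in the computational basis, there exists a unit vector
`|ψ⟩ = Σ_y c_y |y⟩` with `|c_y|² = 1/2^n` for all `y` such that
`tr[((1/2^n)·I − |ψ⟩⟨ψ|) Pm] ≠ 0`. -/
theorem witness_completeness {n : ℕ} (Pm : Matrix (Fin n → Bool) (Fin n → Bool) ℂ)
    (hH : Pm.IsHermitian) (hq : ∃ y z, y ≠ z ∧ Pm y z ≠ 0) :
    ∃ c : (Fin n → Bool) → ℂ,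
      (∀ y, Complex.normSq (c y) = 1 / 2 ^ n) ∧
      ((((1 : ℂ) / 2 ^ n) • (1 : Matrix (Fin n → Bool) (Fin n → Bool) ℂ)
          - Matrix.vecMulVec c (star c)) * Pm).trace ≠ 0 :=
  witness_completeness_general Pm hq
end

section
/- (XY twirling) Let M be a measurement channel on n qubits. The map M^{XY}(ρ) := (1/2^n) Σ_{P∈{X,Y}^⊗n} P·M(PρP)·P is a measurement channel whose POVM elements have zero off-diagonal entries in the computational basis, i.e., M^{XY} is a classical measurement channel. -/
/-!
Conjugation by an `{X,Y}`-word `P_s` sends the outcome projector `|x⟩⟨x|` to `|xᶜ⟩⟨xᶜ|`, so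
`P_s M(P_s ρ P_s) P_s` is the measurement channel of the POVM `x ↦ P_s Π_{xᶜ} P_s`, and the
average over `s` is the measurement channel of `x ↦ T(Π_{xᶜ})` with `T(A) = 2⁻ⁿ Σ_s P_s A P_s`.
Entrywise `(P_s A P_s) y z = φ_s(y) φ_s(zᶜ) A yᶜ zᶜ` for a product phase `φ_s`; the sum over `s`
of `φ_s(y) φ_s(zᶜ)` factorises over the qubits, and on a qubit where `y` and `z` differ the factor
is `1² + (±i)² = 0`. Hence `T(A)` is diagonal.
-/

open ComplexOrder Matrix Finset

/-- Single-qubit Pauli matrix `i^{ax·az} X^{ax} Z^{az}`: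
`(false,false) = I`, `(true,false) = X`, `(false,true) = Z`, `(true,true) = Y`. -/
noncomputable def pauli1 (ax az : Bool) : Matrix Bool Bool ℂ := fun x y =>
  match ax, az with
  | false, false => if x = y then 1 else 0
  | true,  false => if x = y then 0 else 1
  | false, true  => if x = y then (if x then -1 else 1) else 0
  | true,  true  => if x = false ∧ y = true then -Complex.I
                    else if x = true ∧ y = false then Complex.I else 0

/-- The `n`-qubit Pauli word with X-part `a` and Z-part `b`. -/
noncomputable def pauliW {n : ℕ} (a b : Fin n → Bool) :
    Matrix (Fin n → Bool) (Fin n → Bool) ℂ :=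
  fun x y => ∏ i, pauli1 (a i) (b i) (x i) (y i)

/-- The measurement channel of a POVM `{Pm x}`. -/
noncomputable def mchan {n : ℕ}
    (Pm : (Fin n → Bool) → Matrix (Fin n → Bool) (Fin n → Bool) ℂ)
    (ρ : Matrix (Fin n → Bool) (Fin n → Bool) ℂ) :
    Matrix (Fin n → Bool) (Fin n → Bool) ℂ :=
  ∑ x, (Pm x * ρ).trace • Matrix.single x x (1 : ℂ)

section XYPauli

variable {n : ℕ}

/-- The nonzero entry in row `x` of `X` (`b = false`) or `Y` (`b = true`). -/
noncomputable def xyPhase (b x : Bool) : ℂ :=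
  if b then (if x then Complex.I else -Complex.I) else 1

lemma pauli1_true_apply (b x y : Bool) :
    pauli1 true b x y = if y = !x then xyPhase b x else 0 := by
  cases b <;> cases x <;> cases y <;> simp [pauli1, xyPhase]

lemma xyPhase_mul_not (b x : Bool) : xyPhase b x * xyPhase b (!x) = 1 := by
  cases b <;> cases x <;> simp [xyPhase]

lemma star_xyPhase (b x : Bool) : star (xyPhase b x) = xyPhase b (!x) := by
  cases b <;> cases x <;> simp [xyPhase]

lemma sum_xyPhase_mul_self (x : Bool) : ∑ b, xyPhase b x * xyPhase b x = 0 := by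
  cases x <;> simp [xyPhase]

noncomputable def xyPhaseW (s u : Fin n → Bool) : ℂ := ∏ i, xyPhase (s i) (u i)

lemma xyPhaseW_mul_compl (s u : Fin n → Bool) : xyPhaseW s u * xyPhaseW s uᶜ = 1 := by
  simp [xyPhaseW, ← Finset.prod_mul_distrib, xyPhase_mul_not]

lemma star_xyPhaseW (s u : Fin n → Bool) : star (xyPhaseW s u) = xyPhaseW s uᶜ := by
  simp [xyPhaseW, star_xyPhase]

lemma sum_xyPhaseW_mul_eq_zero {y z : Fin n → Bool} (h : y ≠ z) :
    ∑ s, xyPhaseW s y * xyPhaseW s zᶜ = 0 := by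
  obtain ⟨i, hi⟩ := Function.ne_iff.mp h
  have hz : (!z i) = y i := by cases hy : y i <;> simp_all
  simp only [xyPhaseW, ← Finset.prod_mul_distrib]
  rw [← Fintype.prod_sum fun i b => xyPhase b (y i) * xyPhase b (zᶜ i)]
  refine Finset.prod_eq_zero (Finset.mem_univ i) ?_
  simpa [hz] using sum_xyPhase_mul_self (y i)

lemma pauliW_true_apply (s u v : Fin n → Bool) :
    pauliW (fun _ => true) s u v = if v = uᶜ then xyPhaseW s u else 0 := by
  split_ifs with h
  · subst h
    exact Finset.prod_congr rfl fun i _ => by simp [pauli1_true_apply]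
  · obtain ⟨i, hi⟩ : ∃ i, v i ≠ !(u i) := by
      by_contra! hc
      exact h (funext fun i => by simpa using hc i)
    exact Finset.prod_eq_zero (Finset.mem_univ i) (by simp [pauli1_true_apply, hi])

lemma pauliW_true_mul_apply (s : Fin n → Bool) (A : Matrix (Fin n → Bool) (Fin n → Bool) ℂ)
    (u v : Fin n → Bool) :
    (pauliW (fun _ => true) s * A) u v = xyPhaseW s u * A uᶜ v := by
  simp [Matrix.mul_apply, pauliW_true_apply, ite_mul]

lemma mul_pauliW_true_apply (s : Fin n → Bool) (A : Matrix (Fin n → Bool) (Fin n → Bool) ℂ)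
    (u v : Fin n → Bool) :
    (A * pauliW (fun _ => true) s) u v = A u vᶜ * xyPhaseW s vᶜ := by
  simp [Matrix.mul_apply, pauliW_true_apply, eq_compl_comm]

lemma pauliW_true_conj_apply (s : Fin n → Bool) (A : Matrix (Fin n → Bool) (Fin n → Bool) ℂ)
    (y z : Fin n → Bool) :
    (pauliW (fun _ => true) s * A * pauliW (fun _ => true) s) y z
      = xyPhaseW s y * A yᶜ zᶜ * xyPhaseW s zᶜ := by
  rw [mul_pauliW_true_apply, pauliW_true_mul_apply]

lemma pauliW_true_mul_self (s : Fin n → Bool) :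
    pauliW (fun _ => true) s * pauliW (fun _ => true) s = 1 := by
  ext u v
  rw [pauliW_true_mul_apply, pauliW_true_apply, compl_compl]
  by_cases h : v = u
  · rw [h, if_pos rfl, xyPhaseW_mul_compl, one_apply_eq]
  · rw [if_neg h, mul_zero, one_apply_ne' h]

lemma pauliW_true_isHermitian (s : Fin n → Bool) : (pauliW (fun _ => true) s).IsHermitian := by
  ext u v
  rw [conjTranspose_apply, pauliW_true_apply, pauliW_true_apply]
  by_cases h : v = uᶜ
  · rw [if_pos (eq_compl_comm.mp h), if_pos h, h, star_xyPhaseW, compl_compl]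
  · rw [if_neg (mt eq_compl_comm.mp h), if_neg h, star_zero]

lemma pauliW_true_conj_single (s x : Fin n → Bool) :
    pauliW (fun _ => true) s * single x x (1 : ℂ) * pauliW (fun _ => true) s
      = single xᶜ xᶜ 1 := by
  ext y z
  obtain ⟨y, rfl⟩ := compl_surjective y
  obtain ⟨z, rfl⟩ := compl_surjective z
  rw [pauliW_true_conj_apply, compl_compl, compl_compl]
  simp only [single_apply, compl_inj_iff]
  split_ifs with h
  · obtain ⟨rfl, rfl⟩ := h
    rw [mul_one, mul_comm, xyPhaseW_mul_compl]
  · rw [mul_zero, zero_mul]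

lemma conj_mchan_conj (P : Matrix (Fin n → Bool) (Fin n → Bool) ℂ) (σ : Equiv.Perm (Fin n → Bool))
    (hP : ∀ x, P * single x x (1 : ℂ) * P = single (σ x) (σ x) 1)
    (Pm : (Fin n → Bool) → Matrix (Fin n → Bool) (Fin n → Bool) ℂ)
    (ρ : Matrix (Fin n → Bool) (Fin n → Bool) ℂ) :
    P * mchan Pm (P * ρ * P) * P = mchan (fun x => P * Pm (σ.symm x) * P) ρ := by
  have hterm : ∀ x, P * ((Pm x * (P * ρ * P)).trace • single x x (1 : ℂ)) * P
      = (P * Pm x * P * ρ).trace • single (σ x) (σ x) 1 := fun x => by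
    rw [Matrix.mul_smul, Matrix.smul_mul, hP]
    congr 1
    simp only [← Matrix.mul_assoc]
    rw [trace_mul_comm]
    simp only [Matrix.mul_assoc]
  simp only [mchan, Finset.mul_sum, Finset.sum_mul, hterm]
  exact Fintype.sum_equiv σ _ _ fun x => by rw [Equiv.symm_apply_apply]

lemma smul_sum_mchan {ι : Type*} [Fintype ι] (c : ℂ)
    (Q : ι → (Fin n → Bool) → Matrix (Fin n → Bool) (Fin n → Bool) ℂ)
    (ρ : Matrix (Fin n → Bool) (Fin n → Bool) ℂ) :
    c • ∑ i, mchan (Q i) ρ = mchan (fun x => c • ∑ i, Q i x) ρ := by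
  simp only [mchan, Finset.smul_sum, smul_smul]
  rw [Finset.sum_comm]
  refine Finset.sum_congr rfl fun x _ => ?_
  rw [← Finset.sum_smul]
  simp only [Finset.sum_mul, trace_sum, Matrix.smul_mul, trace_smul, smul_eq_mul]

noncomputable def xyTwirl (A : Matrix (Fin n → Bool) (Fin n → Bool) ℂ) :
    Matrix (Fin n → Bool) (Fin n → Bool) ℂ :=
  ((1 : ℂ) / 2 ^ n) • ∑ s, pauliW (fun _ => true) s * A * pauliW (fun _ => true) s

lemma xyTwirl_posSemidef {A : Matrix (Fin n → Bool) (Fin n → Bool) ℂ} (hA : A.PosSemidef) :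
    (xyTwirl A).PosSemidef := by
  unfold xyTwirl
  refine PosSemidef.smul (posSemidef_sum _ fun s _ => ?_) (by positivity)
  simpa only [(pauliW_true_isHermitian s).eq] using
    hA.conjTranspose_mul_mul_same (pauliW (fun _ => true) s)

lemma xyTwirl_apply_of_ne (A : Matrix (Fin n → Bool) (Fin n → Bool) ℂ) {y z : Fin n → Bool}
    (h : y ≠ z) : xyTwirl A y z = 0 := by
  simp only [xyTwirl, Matrix.smul_apply, Matrix.sum_apply, pauliW_true_conj_apply]
  rw [Finset.sum_congr rfl fun s _ => mul_right_comm _ (A yᶜ zᶜ) _, ← Finset.sum_mul,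
    sum_xyPhaseW_mul_eq_zero h, zero_mul, smul_zero]

lemma sum_xyTwirl {ι : Type*} [Fintype ι] (A : ι → Matrix (Fin n → Bool) (Fin n → Bool) ℂ) :
    ∑ i, xyTwirl (A i) = xyTwirl (∑ i, A i) := by
  simp only [xyTwirl, ← Finset.smul_sum, Finset.mul_sum, Finset.sum_mul]
  rw [Finset.sum_comm]

lemma xyTwirl_one : xyTwirl (1 : Matrix (Fin n → Bool) (Fin n → Bool) ℂ) = 1 := by
  simp only [xyTwirl, Matrix.mul_one, pauliW_true_mul_self, Finset.sum_const, Finset.card_univ,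
    Fintype.card_pi, Fintype.card_bool, Finset.prod_const, Fintype.card_fin]
  rw [← Nat.cast_smul_eq_nsmul ℂ, smul_smul, Nat.cast_pow, Nat.cast_two, one_div,
    inv_mul_cancel₀ (pow_ne_zero n two_ne_zero), one_smul]

end XYPauli

/-- XY twirling: for a measurement channel `M` of a POVM `{Pm x}` on `n` qubits, the
map `M^{XY}(ρ) = (1/2^n) Σ_{P∈{X,Y}^⊗n} P·M(PρP)·P` is the measurement channel of a
POVM all of whose elements are diagonal in the computational basis — i.e. `M^{XY}`
is a classical measurement channel.  (Pauli words in `{X,Y}^⊗n` are `pauliW 1 s`.) -/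
theorem XY_twirling_classical {n : ℕ}
    (Pm : (Fin n → Bool) → Matrix (Fin n → Bool) (Fin n → Bool) ℂ)
    (hpos : ∀ x, (Pm x).PosSemidef) (hsum : ∑ x, Pm x = 1) :
    ∃ Pm' : (Fin n → Bool) → Matrix (Fin n → Bool) (Fin n → Bool) ℂ,
      (∀ x, (Pm' x).PosSemidef) ∧ (∑ x, Pm' x = 1) ∧
      (∀ x y z, y ≠ z → Pm' x y z = 0) ∧
      ∀ ρ, ((1 : ℂ) / 2 ^ n) •
            ∑ s, pauliW (fun _ => true) s *
              mchan Pm (pauliW (fun _ => true) s * ρ * pauliW (fun _ => true) s) *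
              pauliW (fun _ => true) s
          = mchan Pm' ρ := by
  refine ⟨fun x => xyTwirl (Pm xᶜ), fun x => xyTwirl_posSemidef (hpos xᶜ), ?_,
    fun x _ _ => xyTwirl_apply_of_ne (Pm xᶜ), fun ρ => ?_⟩
  · rw [sum_xyTwirl, compl_bijective.sum_comp Pm, hsum, xyTwirl_one]
  · simp only [conj_mchan_conj _ (compl_involutive.toPerm _) (pauliW_true_conj_single _)]
    exact smul_sum_mchan _ _ ρ
end

section
/- (Regularization by Pauli twirling) Let {Π_x^{Pauli}} be the POVM of the Pauli-twirled measurement channel M^{Pauli}. Then the diagonals of any two of its elements are related by diag(Π_y^{Pauli}) = T_y T_x^{−1} diag(Π_x^{Pauli}), where the 2^n × 2^n matrix T_x has entries (T_x)_{i,j} = (−1)^{(x⊕i)·j} (bitwise XOR and inner product mod 2). In particular every T_x is invertible. -/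
open ComplexOrder Matrix Finset

/-- Bitwise inner product. -/
def bdot {n : ℕ} (s x : Fin n → Bool) : ℕ := (Finset.univ.filter fun i => s i ∧ x i).card

/-- The transition matrix `(T_x)_{i,j} = (−1)^{(x⊕i)·j}`. -/
noncomputable def Tmat {n : ℕ} (x : Fin n → Bool) :
    Matrix (Fin n → Bool) (Fin n → Bool) ℂ :=
  fun i j => (-1 : ℂ) ^ bdot (fun k => xor (x k) (i k)) j

/-!
Conjugation by the Pauli word with X-part `a` permutes the computational basis by `u ↦ u + a`
(addition in `(ℤ/2)ⁿ`, i.e. bitwise xor). Evaluating the twirled channel on `|j⟩⟨j|` therefore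
gives `(Π_y^{Pauli})_{jj} = 4⁻ⁿ ∑_{a,b} (Π_{y+a})_{j+a,j+a}`, which is unchanged when `y` and `j`
are shifted by the same `c`. On the other side the rows of `T_x` are the characters
`j ↦ (-1)^{(x+i)·j}` of `(ℤ/2)ⁿ`, so their orthogonality gives `T_y T_xᵀ = 2ⁿ P`, where `P` is
the permutation matrix of `i ↦ x + y + i`. Hence `T_x` is invertible and `T_y T_x⁻¹` sends the
diagonal of `Π_x^{Pauli}` to `i ↦ (Π_x^{Pauli})_{x+y+i, x+y+i}`, which by the shift invariance
with `c = x + y` is the diagonal of `Π_y^{Pauli}`.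
-/

instance Pi.booleanRing {ι : Type*} {R : ι → Type*} [∀ i, BooleanRing (R i)] :
    BooleanRing (∀ i, R i) where
  isIdempotentElem f := funext fun i => BooleanRing.isIdempotentElem (f i)

theorem BooleanRing.add_eq_iff_eq_add {α : Type*} [BooleanRing α] {a b c : α} :
    a + b = c ↔ b = a + c := by
  constructor <;> rintro rfl <;> rw [← add_assoc, BooleanRing.add_self, zero_add]

def IsPauliTwirl {n : ℕ} (Pm PmP : (Fin n → Bool) → Matrix (Fin n → Bool) (Fin n → Bool) ℂ) :
    Prop :=
  ∀ ρ, mchan PmP ρ = ((1 : ℂ) / 4 ^ n) •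
    ∑ a, ∑ b, pauliW a b * mchan Pm (pauliW a b * ρ * pauliW a b) * pauliW a b

section

variable {n : ℕ}

lemma pauli1_eq_zero (ax az u v : Bool) (h : v ≠ xor u ax) : pauli1 ax az u v = 0 := by
  cases ax <;> cases az <;> cases u <;> cases v <;> simp_all [pauli1]

lemma pauli1_mul_pauli1_swap (ax az u v : Bool) :
    pauli1 ax az u v * pauli1 ax az v u = if v = xor u ax then 1 else 0 := by
  cases ax <;> cases az <;> cases u <;> cases v <;> simp [pauli1, Complex.I_mul_I]

lemma pauliW_eq_zero {a b u v : Fin n → Bool} (h : v ≠ u + a) : pauliW a b u v = 0 := by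
  obtain ⟨i, hi⟩ := Function.ne_iff.mp h
  exact prod_eq_zero (mem_univ i) (pauli1_eq_zero _ _ _ _ hi)

lemma pauliW_mul_pauliW_swap (a b u v : Fin n → Bool) :
    pauliW a b u v * pauliW a b v u = if v = u + a then 1 else 0 := by
  simp only [pauliW, ← prod_mul_distrib, pauli1_mul_pauli1_swap, prod_boole, mem_univ,
    true_imp_iff, funext_iff]
  rfl

lemma pauliW_conj_diagonal (a b : Fin n → Bool) (d : (Fin n → Bool) → ℂ) :
    pauliW a b * diagonal d * pauliW a b = diagonal fun u => d (u + a) := by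
  ext u v
  have hsupp : ∀ k, k ≠ u + a → (pauliW a b * diagonal d) u k * pauliW a b k v = 0 :=
    fun k hk => by rw [mul_diagonal, pauliW_eq_zero hk, zero_mul, zero_mul]
  rw [mul_apply, sum_eq_single (u + a) (fun k _ => hsupp k) (by simp), mul_diagonal]
  rcases eq_or_ne u v with rfl | huv
  · rw [mul_right_comm, pauliW_mul_pauliW_swap, if_pos rfl, one_mul, diagonal_apply_eq]
  · have hv : v ≠ u + a + a := by rwa [add_assoc, BooleanRing.add_self, add_zero, ne_comm]
    rw [pauliW_eq_zero hv, mul_zero, diagonal_apply_ne _ huv]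

lemma pauliW_conj_single (a b j : Fin n → Bool) :
    pauliW a b * single j j 1 * pauliW a b = single (j + a) (j + a) 1 := by
  rw [← diagonal_single, pauliW_conj_diagonal, ← diagonal_single]
  congr 1
  ext u
  simp only [Pi.single_apply, add_comm u a, BooleanRing.add_eq_iff_eq_add, add_comm a j]

lemma mchan_eq_diagonal (Pm : (Fin n → Bool) → Matrix (Fin n → Bool) (Fin n → Bool) ℂ)
    (ρ : Matrix (Fin n → Bool) (Fin n → Bool) ℂ) :
    mchan Pm ρ = diagonal fun x => (Pm x * ρ).trace := by
  ext u v
  simp [mchan, Matrix.sum_apply, single_apply, diagonal_apply, ite_and, eq_comm]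

namespace IsPauliTwirl

variable {Pm PmP : (Fin n → Bool) → Matrix (Fin n → Bool) (Fin n → Bool) ℂ}

lemma diag_eq_sum (hP : IsPauliTwirl Pm PmP) (y j : Fin n → Bool) :
    PmP y j j = (1 / 4 ^ n) * ∑ a, ∑ _b : Fin n → Bool, Pm (y + a) (j + a) (j + a) := by
  have h := congrFun₂ (hP (single j j 1)) y y
  simpa only [mchan_eq_diagonal, pauliW_conj_single, pauliW_conj_diagonal, trace_mul_single,
    Matrix.sum_apply, Matrix.smul_apply, diagonal_apply_eq, MulOpposite.op_one, one_smul,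
    smul_eq_mul] using h

lemma diag_add_add (hP : IsPauliTwirl Pm PmP) (c y j : Fin n → Bool) :
    PmP (c + y) (c + j) (c + j) = PmP y j j := by
  rw [hP.diag_eq_sum, hP.diag_eq_sum]
  congr 1
  exact Fintype.sum_equiv (Equiv.addLeft c) _ _ fun a => by
    simp only [Equiv.coe_addLeft, add_left_comm, add_assoc]

end IsPauliTwirl

lemma neg_one_pow_bdot (s k : Fin n → Bool) :
    (-1 : ℂ) ^ bdot s k = ∏ i, if s i ∧ k i then -1 else 1 := by
  rw [bdot, prod_ite, prod_const, prod_const, one_pow, mul_one]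

lemma neg_one_pow_bdot_add (s t k : Fin n → Bool) :
    (-1 : ℂ) ^ bdot (s + t) k = (-1) ^ bdot s k * (-1) ^ bdot t k := by
  simp only [neg_one_pow_bdot, ← prod_mul_distrib]
  refine prod_congr rfl fun i _ => ?_
  cases hs : s i <;> cases ht : t i <;> cases hk : k i <;> simp +decide [Pi.add_apply, hs, ht]

lemma sum_neg_one_pow_bdot (s : Fin n → Bool) :
    ∑ k, (-1 : ℂ) ^ bdot s k = if s = 0 then 2 ^ n else 0 := by
  simp only [neg_one_pow_bdot]
  rw [← Fintype.prod_sum (fun i b => if s i ∧ b = true then (-1 : ℂ) else 1)]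
  simp only [Fintype.sum_bool, and_true]
  split_ifs with hs
  · simp [hs, one_add_one_eq_two]
  · obtain ⟨i, hi⟩ := Function.ne_iff.mp hs
    exact prod_eq_zero (mem_univ i) (by simp [Bool.eq_true_of_not_eq_false hi])

lemma Tmat_mul_transpose_apply (x y i j : Fin n → Bool) :
    (Tmat y * (Tmat x)ᵀ) i j = if j = x + y + i then 2 ^ n else 0 := by
  change ∑ k, (-1 : ℂ) ^ bdot (y + i) k * (-1) ^ bdot (x + j) k = _
  have hcond : y + i + (x + j) = 0 ↔ j = x + y + i := by
    rw [BooleanRing.add_eq_zero', eq_comm, BooleanRing.add_eq_iff_eq_add, add_assoc]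
  simp only [← neg_one_pow_bdot_add, sum_neg_one_pow_bdot, hcond]

lemma Tmat_mul_smul_transpose (x : Fin n → Bool) :
    Tmat x * ((2 ^ n : ℂ)⁻¹ • (Tmat x)ᵀ) = 1 := by
  ext i j
  rw [Matrix.mul_smul, Matrix.smul_apply, Tmat_mul_transpose_apply, BooleanRing.add_self,
    zero_add, one_apply]
  simp only [eq_comm (a := j)]
  split_ifs <;> simp

lemma isUnit_Tmat (x : Fin n → Bool) : IsUnit (Tmat x) :=
  (isUnit_iff_isUnit_det _).mpr (isUnit_det_of_right_inverse (Tmat_mul_smul_transpose x))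

lemma Tmat_mul_inv_mulVec (x y : Fin n → Bool) (v : (Fin n → Bool) → ℂ) :
    (Tmat y * (Tmat x)⁻¹) *ᵥ v = fun i => v (x + y + i) := by
  ext i
  rw [inv_eq_right_inv (Tmat_mul_smul_transpose x), Matrix.mul_smul, smul_mulVec, Pi.smul_apply,
    mulVec, dotProduct]
  simp [Tmat_mul_transpose_apply]

end

theorem pauli_twirl_regularizes_general {n : ℕ}
    (Pm PmP : (Fin n → Bool) → Matrix (Fin n → Bool) (Fin n → Bool) ℂ)
    (hP : ∀ ρ, mchan PmP ρ
        = ((1 : ℂ) / 4 ^ n) •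
            ∑ a, ∑ b, pauliW a b * mchan Pm (pauliW a b * ρ * pauliW a b) * pauliW a b) :
    (∀ x : Fin n → Bool, IsUnit (Tmat x)) ∧
    ∀ x y : Fin n → Bool, (fun i => PmP y i i) = (Tmat y * (Tmat x)⁻¹).mulVec (fun i => PmP x i i) := by
  refine ⟨isUnit_Tmat, fun x y => ?_⟩
  have hshift : x + y + y = x := by rw [add_assoc, BooleanRing.add_self, add_zero]
  rw [Tmat_mul_inv_mulVec]
  funext i
  rw [← IsPauliTwirl.diag_add_add (Pm := Pm) hP (x + y) y i, hshift]

/-- Regularization by Pauli twirling: if `{PmP x}` is the POVM of the Pauli-twirled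
measurement channel `M^{Pauli}`, then every `T_x` is invertible and
`diag(PmP_y) = T_y T_x⁻¹ diag(PmP_x)` for all `x, y`. -/
theorem pauli_twirl_regularizes {n : ℕ}
    (Pm PmP : (Fin n → Bool) → Matrix (Fin n → Bool) (Fin n → Bool) ℂ)
    (hpos : ∀ x, (Pm x).PosSemidef) (hsum : ∑ x, Pm x = 1)
    (hP : ∀ ρ, mchan PmP ρ
        = ((1 : ℂ) / 4 ^ n) •
            ∑ a, ∑ b, pauliW a b * mchan Pm (pauliW a b * ρ * pauliW a b) * pauliW a b) :
    (∀ x : Fin n → Bool, IsUnit (Tmat x)) ∧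
    ∀ x y : Fin n → Bool, (fun i => PmP y i i) = (Tmat y * (Tmat x)⁻¹).mulVec (fun i => PmP x i i) :=
  pauli_twirl_regularizes_general Pm PmP hP
end
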